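/- For every integer $k \ge 2$, the identity $\tilde C^{(k)} = \tilde D_k^{(k)} \, \tilde y_2 \tilde y_3 \cdots \tilde y_k$ holds in $\mathcal{Y}_\infty$. -/
import Mathlib


/- Setting: `Yinf R` is the Laurent polynomial ring over a commutative ring `R` in commuting
variables `ỹ_n` indexed by `n : ℤ` (realized as the monoid algebra of `ℤ →₀ ℤ`), with fixed
scalars `F n : R`. -/

noncomputable section

variable (R : Type) [CommRing R] (F : ℤ → R)

/-- The Laurent polynomial ring `𝒴_∞ = R[ỹ_n^{±1} ; n ∈ ℤ]`. -/
abbrev Yinf := AddMonoidAlgebra R (ℤ →₀ ℤ)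

/-- The variable `ỹ_n`. -/
def yt (n : ℤ) : Yinf R := AddMonoidAlgebra.single (Finsupp.single n (1 : ℤ)) (1 : R)

/-- The inverse variable `ỹ_n⁻¹`. -/
def ytinv (n : ℤ) : Yinf R := AddMonoidAlgebra.single (Finsupp.single n (-1 : ℤ)) (1 : R)

/-- The scalar `F_n` viewed in `𝒴_∞`. -/
def Fa (n : ℤ) : Yinf R := algebraMap R (Yinf R) (F n)

/-- `z̃_n = ỹ_n + F_n ỹ_{n+1}⁻¹`. -/
def zt (n : ℤ) : Yinf R := yt R n + Fa R F n * ytinv R (n + 1)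

/-- `X̃_n = F_n ỹ_n⁻¹ ỹ_{n+1}⁻¹`. -/
def Xt (n : ℤ) : Yinf R := Fa R F n * ytinv R n * ytinv R (n + 1)

/-- `D̃_n^{(k)} = 1 + ∑_{p=0}^{k-2} X̃_n X̃_{n-1} ⋯ X̃_{n-p}` (for `k ≥ 2`). -/
def Dt (n : ℤ) (k : ℕ) : Yinf R :=
  1 + ∑ p ∈ Finset.range (k - 1), ∏ j ∈ Finset.range (p + 1), Xt R F (n - (j : ℤ))

/-- `C̃^{(1)} = 1`, `C̃^{(2)} = z̃_2`, `C̃^{(k)} = z̃_k C̃^{(k-1)} - F_{k-1} C̃^{(k-2)}`. -/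
def Ct : ℕ → Yinf R
  | 0 => 1
  | 1 => 1
  | 2 => zt R F 2
  | (k + 3) => zt R F ((k + 3 : ℕ) : ℤ) * Ct (k + 2) - Fa R F ((k + 2 : ℕ) : ℤ) * Ct (k + 1)

lemma yt_mul_ytinv (n : ℤ) : yt R n * ytinv R n = 1 := by
  unfold yt ytinv
  rw [AddMonoidAlgebra.single_mul_single, one_mul]
  have h : Finsupp.single n (1:ℤ) + Finsupp.single n (-1) = 0 := by
    rw [← Finsupp.single_add]; norm_num
  rw [h, AddMonoidAlgebra.one_def]

lemma yt_mul_Xt (n : ℤ) : yt R (n + 1) * Xt R F n = Fa R F n * ytinv R n := by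
  have h : yt R (n+1) * Xt R F n
      = Fa R F n * ytinv R n * (yt R (n+1) * ytinv R (n+1)) := by unfold Xt; ring
  rw [h, yt_mul_ytinv, mul_one]

lemma Xt_mul_yt (n : ℤ) : Xt R F n * yt R n = Fa R F n * ytinv R (n + 1) := by
  have h : Xt R F n * yt R n
      = Fa R F n * ytinv R (n+1) * (yt R n * ytinv R n) := by unfold Xt; ring
  rw [h, yt_mul_ytinv, mul_one]

def Yk (k : ℕ) : Yinf R := ∏ j ∈ Finset.Icc 2 k, yt R (j : ℤ)

lemma Yk_succ (k : ℕ) (hk : 1 ≤ k) :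
    Yk R (k + 1) = Yk R k * yt R ((k + 1 : ℕ) : ℤ) := by
  unfold Yk
  exact Finset.prod_Icc_succ_top (by omega) _

lemma prod_shift (n : ℤ) (p : ℕ) :
    ∏ j ∈ Finset.range (p+1), Xt R F (n - (j:ℤ))
      = Xt R F n * ∏ j ∈ Finset.range p, Xt R F ((n-1) - (j:ℤ)) := by
  rw [Finset.prod_range_succ']
  have : ∀ j : ℕ, n - ((j+1 : ℕ) : ℤ) = (n-1) - (j:ℤ) := by intro j; push_cast; ring
  simp only [this, Nat.cast_zero, sub_zero, mul_comm]

lemma Dt_as_sum (n : ℤ) (m : ℕ) :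
    Dt R F n (m+1) = ∑ p ∈ Finset.range (m+1), ∏ j ∈ Finset.range p, Xt R F (n - (j:ℤ)) := by
  rw [Finset.sum_range_succ']
  simp [Dt, add_comm]

lemma Dt_succ (n : ℤ) (m : ℕ) :
    Dt R F n (m+2) = 1 + Xt R F n * Dt R F (n-1) (m+1) := by
  rw [Dt_as_sum R F (n-1) m]
  show (1 : Yinf R) + ∑ p ∈ Finset.range (m+1), ∏ j ∈ Finset.range (p+1), Xt R F (n - (j:ℤ)) = _
  rw [Finset.sum_congr rfl fun p _ => prod_shift R F n p, ← Finset.mul_sum]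

lemma ytinv_mul_Yk (k : ℕ) (hk : 1 ≤ k) :
    ytinv R ((k+1:ℕ):ℤ) * Yk R (k+1) = Yk R k := by
  rw [Yk_succ R k hk]
  have h : ytinv R ((k+1:ℕ):ℤ) * (Yk R k * yt R ((k+1:ℕ):ℤ))
      = Yk R k * (yt R ((k+1:ℕ):ℤ) * ytinv R ((k+1:ℕ):ℤ)) := by ring
  rw [h, yt_mul_ytinv, mul_one]

lemma key_step (m : ℕ) :
    yt R ((m+3:ℕ):ℤ) * (Dt R F ((m+2:ℕ):ℤ) (m+2) * Yk R (m+2))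
      = Yk R (m+3) + Fa R F ((m+2:ℕ):ℤ) * (Dt R F ((m+1:ℕ):ℤ) (m+1) * Yk R (m+1)) := by
  have hD : Dt R F ((m+2:ℕ):ℤ) (m+2)
      = 1 + Xt R F ((m+2:ℕ):ℤ) * Dt R F ((m+1:ℕ):ℤ) (m+1) := by
    have h := Dt_succ R F ((m+2:ℕ):ℤ) m
    have hc : ((m+2:ℕ):ℤ) - 1 = ((m+1:ℕ):ℤ) := by push_cast; ring
    rw [hc] at h; exact h
  have hX : yt R ((m+3:ℕ):ℤ) * Xt R F ((m+2:ℕ):ℤ)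
      = Fa R F ((m+2:ℕ):ℤ) * ytinv R ((m+2:ℕ):ℤ) := by
    have h := yt_mul_Xt R F ((m+2:ℕ):ℤ)
    have hc : ((m+2:ℕ):ℤ) + 1 = ((m+3:ℕ):ℤ) := by push_cast; ring
    rw [hc] at h; exact h
  have hY3 : Yk R (m+3) = Yk R (m+2) * yt R ((m+3:ℕ):ℤ) := Yk_succ R (m+2) (by omega)
  have hYi : ytinv R ((m+2:ℕ):ℤ) * Yk R (m+2) = Yk R (m+1) := ytinv_mul_Yk R (m+1) (by omega)
  rw [hD]
  linear_combination (Dt R F ((m+1:ℕ):ℤ) (m+1) * Yk R (m+2)) * hX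
    + (Fa R F ((m+2:ℕ):ℤ) * Dt R F ((m+1:ℕ):ℤ) (m+1)) * hYi - hY3

lemma key_all : ∀ m : ℕ,
    Ct R F (m+1) = Dt R F ((m+1:ℕ):ℤ) (m+1) * Yk R (m+1) ∧
    Ct R F (m+2) = Dt R F ((m+2:ℕ):ℤ) (m+2) * Yk R (m+2) := by
  intro m
  induction m with
  | zero =>
    constructor
    · show (1 : Yinf R) = _
      have hI : Finset.Icc 2 1 = (∅ : Finset ℕ) := Finset.Icc_eq_empty (by omega)
      simp [Dt, Yk, hI]
    · show zt R F 2 = _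
      have h2 : Dt R F ((0+2:ℕ):ℤ) (0+2) = 1 + Xt R F 2 := by
        norm_num [Dt]
      have hY2 : Yk R (0+2) = yt R 2 := by
        norm_num [Yk]
      have hz : zt R F 2 = yt R 2 + Fa R F 2 * ytinv R 3 := by
        unfold zt; norm_num
      have hX2 : Xt R F 2 = Fa R F 2 * ytinv R 2 * ytinv R 3 := by
        unfold Xt; norm_num
      rw [h2, hY2, hz, hX2]
      linear_combination (-(Fa R F 2 * ytinv R 3)) * yt_mul_ytinv R 2
  | succ m ih =>
    refine ⟨ih.2, ?_⟩
    have hC : Ct R F (m+3) = zt R F ((m+3:ℕ):ℤ) * Ct R F (m+2)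
        - Fa R F ((m+2:ℕ):ℤ) * Ct R F (m+1) := rfl
    show Ct R F (m+3) = Dt R F ((m+3:ℕ):ℤ) (m+3) * Yk R (m+3)
    rw [hC, ih.1, ih.2]
    have hK := key_step R F m
    have hD : Dt R F ((m+3:ℕ):ℤ) (m+3)
        = 1 + Xt R F ((m+3:ℕ):ℤ) * Dt R F ((m+2:ℕ):ℤ) (m+2) := by
      have h := Dt_succ R F ((m+3:ℕ):ℤ) (m+1)
      have hc : ((m+3:ℕ):ℤ) - 1 = ((m+2:ℕ):ℤ) := by push_cast; ring
      rw [hc] at h; exact h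
    have hX : Xt R F ((m+3:ℕ):ℤ) * yt R ((m+3:ℕ):ℤ)
        = Fa R F ((m+3:ℕ):ℤ) * ytinv R ((m+4:ℕ):ℤ) := by
      have h := Xt_mul_yt R F ((m+3:ℕ):ℤ)
      have hc : ((m+3:ℕ):ℤ) + 1 = ((m+4:ℕ):ℤ) := by push_cast; ring
      rw [hc] at h; exact h
    have hY : Yk R (m+3) = Yk R (m+2) * yt R ((m+3:ℕ):ℤ) := Yk_succ R (m+2) (by omega)
    have hz : zt R F ((m+3:ℕ):ℤ)
        = yt R ((m+3:ℕ):ℤ) + Fa R F ((m+3:ℕ):ℤ) * ytinv R ((m+4:ℕ):ℤ) := by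
      unfold zt
      have hc : ((m+3:ℕ):ℤ) + 1 = ((m+4:ℕ):ℤ) := by push_cast; ring
      rw [hc]
    rw [hD, hz]
    linear_combination hK
      - (Xt R F ((m+3:ℕ):ℤ) * Dt R F ((m+2:ℕ):ℤ) (m+2)) * hY
      - (Dt R F ((m+2:ℕ):ℤ) (m+2) * Yk R (m+2)) * hX

/-- for every `k ≥ 2`, `C̃^{(k)} = D̃_k^{(k)} ỹ_2 ỹ_3 ⋯ ỹ_k` in `𝒴_∞`. -/
theorem stmt_17 : ∀ k : ℕ, 2 ≤ k →
    Ct R F k = Dt R F (k : ℤ) k * ∏ j ∈ Finset.Icc 2 k, yt R (j : ℤ) := by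
  intro k hk
  obtain ⟨m, rfl⟩ : ∃ m, k = m + 2 := ⟨k - 2, by omega⟩
  exact (key_all R F m).2
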